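/- arXiv:2408.14973 — 2 statements merged into one kernel-verified Lean document; each statement's English description precedes it below -/
import Mathlib

section
/- Every statistically Cauchy sequence in an S-metric space (X,S) is statistically bounded. -/
open Filter

open scoped Classical in
/-- Natural density: `A ⊆ ℕ` has density `d` if `|{k ∈ A : k < n}|/n → d`. -/
def HasDensity (A : Set ℕ) (d : ℝ) : Prop :=
  Filter.Tendsto
    (fun n : ℕ => (((Finset.range n).filter (fun k => k ∈ A)).card : ℝ) / n)
    Filter.atTop (nhds d)

/-- `S` is an S-metric on `X`. -/
structure IsSMetric {X : Type*} (S : X → X → X → ℝ) : Prop where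
  nonneg : ∀ x y z, 0 ≤ S x y z
  eq_zero_iff : ∀ x y z, S x y z = 0 ↔ x = y ∧ y = z
  triangle : ∀ x y z a, S x y z ≤ S x x a + S y y a + S z z a

/-- Ordinary convergence of a sequence in an S-metric space. -/
def SConvergesTo {X : Type*} (S : X → X → X → ℝ) (x : ℕ → X) (l : X) : Prop :=
  ∀ ε : ℝ, 0 < ε → ∃ N : ℕ, ∀ n ≥ N, S (x n) (x n) l < ε

/-- Statistical convergence of a sequence in an S-metric space. -/
def SStatConvergesTo {X : Type*} (S : X → X → X → ℝ) (x : ℕ → X) (l : X) : Prop :=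
  ∀ ε : ℝ, 0 < ε → HasDensity {n : ℕ | ε ≤ S (x n) (x n) l} 0

/-- Cauchy sequence in an S-metric space. -/
def SCauchy {X : Type*} (S : X → X → X → ℝ) (x : ℕ → X) : Prop :=
  ∀ ε : ℝ, 0 < ε → ∃ k : ℕ, ∀ n ≥ k, ∀ m ≥ k, S (x n) (x n) (x m) < ε

/-- Statistically Cauchy sequence in an S-metric space. -/
def SStatCauchy {X : Type*} (S : X → X → X → ℝ) (x : ℕ → X) : Prop :=
  ∀ ε : ℝ, 0 < ε → ∃ N : ℕ, HasDensity {n : ℕ | ε ≤ S (x n) (x n) (x N)} 0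

/-- Statistically bounded sequence in an S-metric space. -/
def SStatBounded {X : Type*} (S : X → X → X → ℝ) (x : ℕ → X) : Prop :=
  ∀ u : X, ∃ B : ℝ, 0 < B ∧ HasDensity {n : ℕ | B ≤ S (x n) (x n) u} 0

/-- Rough convergence with roughness degree `r`. -/
def SRoughConvergesTo {X : Type*} (S : X → X → X → ℝ) (r : ℝ) (x : ℕ → X) (p : X) : Prop :=
  ∀ ε : ℝ, 0 < ε → ∃ k : ℕ, ∀ n ≥ k, S (x n) (x n) p < r + ε

/-- Rough statistical convergence with roughness degree `r`. -/
def SRoughStatConvergesTo {X : Type*} (S : X → X → X → ℝ) (r : ℝ) (x : ℕ → X) (p : X) : Prop :=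
  ∀ ε : ℝ, 0 < ε → HasDensity {n : ℕ | r + ε ≤ S (x n) (x n) p} 0

/-- The rough statistical limit set `st-LIM^r x_n`. -/
def stLIM {X : Type*} (S : X → X → X → ℝ) (r : ℝ) (x : ℕ → X) : Set X :=
  {p : X | SRoughStatConvergesTo S r x p}

/-- The topology on `X` generated by the open balls of the S-metric. -/
def sBallTopology {X : Type*} (S : X → X → X → ℝ) : TopologicalSpace X :=
  TopologicalSpace.generateFrom
    {B : Set X | ∃ c : X, ∃ ε : ℝ, 0 < ε ∧ B = {y : X | S y y c < ε}}

open scoped Classical in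
lemma hasDensity_zero_mono {A B : Set ℕ} (hAB : A ⊆ B) (hB : HasDensity B 0) :
    HasDensity A 0 := by
  have h0 : Filter.Tendsto (fun _ : ℕ => (0:ℝ)) Filter.atTop (nhds 0) := tendsto_const_nhds
  refine tendsto_of_tendsto_of_tendsto_of_le_of_le h0 hB ?_ ?_
  · intro n; positivity
  · intro n
    have hc : ((Finset.range n).filter (fun k => k ∈ A)).card ≤
        ((Finset.range n).filter (fun k => k ∈ B)).card := by
      apply Finset.card_le_card
      intro k hk
      simp only [Finset.mem_filter] at hk ⊢
      exact ⟨hk.1, hAB hk.2⟩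
    rcases Nat.eq_zero_or_pos n with h | h
    · simp [h]
    · have hn : (0:ℝ) < n := by exact_mod_cast h
      rw [div_le_div_iff_of_pos_right hn]
      exact_mod_cast hc

theorem stmt_8 {X : Type*} [Nonempty X] (S : X → X → X → ℝ) (hS : IsSMetric S)
    (x : ℕ → X) (h : SStatCauchy S x) : SStatBounded S x := by
  intro u
  obtain ⟨N, hN⟩ := h 1 one_pos
  refine ⟨2 + S u u (x N) + 1, by have := hS.nonneg u u (x N); linarith, ?_⟩
  refine hasDensity_zero_mono ?_ hN
  intro n hn
  simp only [Set.mem_setOf_eq] at hn ⊢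
  by_contra hlt
  push_neg at hlt
  have htri := hS.triangle (x n) (x n) u (x N)
  have := hS.nonneg u u (x N)
  nlinarith
end

section
/- Let r ≥ 0 and let (x_n) be a sequence in an S-metric space (X,S). Then the diameter of the rough statistical limit set st-LIM^r x_n is at most 3r; that is, for all ξ, η ∈ st-LIM^r x_n, S(ξ,ξ,η) ≤ 3r. -/
open Filter

namespace IsSMetric

variable {X : Type*} {S : X → X → X → ℝ}

theorem apply_self (hS : IsSMetric S) (a : X) : S a a a = 0 :=
  (hS.eq_zero_iff a a a).2 ⟨rfl, rfl⟩

theorem symm (hS : IsSMetric S) (a b : X) : S a a b = S b b a := by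
  have key : ∀ a b : X, S a a b ≤ S b b a := fun a b => by
    simpa [hS.apply_self] using hS.triangle a a b a
  exact (key a b).antisymm (key b a)

end IsSMetric

theorem hasDensity_univ : HasDensity Set.univ 1 := by
  refine tendsto_const_nhds.congr' ?_
  filter_upwards [eventually_ne_atTop 0] with n hn
  simp [hn]

theorem HasDensity.unique {A : Set ℕ} {d d' : ℝ} (h : HasDensity A d) (h' : HasDensity A d') :
    d = d' :=
  tendsto_nhds_unique h h'

theorem HasDensity.union_of_zero {A B : Set ℕ} (hA : HasDensity A 0) (hB : HasDensity B 0) :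
    HasDensity (A ∪ B) 0 := by
  classical
  refine tendsto_of_tendsto_of_tendsto_of_le_of_le tendsto_const_nhds
    (by simpa using hA.add hB) (fun n => by positivity) (fun n => ?_)
  rw [← add_div]
  gcongr
  have hcard : ((Finset.range n).filter (· ∈ A ∪ B)).card ≤
      ((Finset.range n).filter (· ∈ A)).card + ((Finset.range n).filter (· ∈ B)).card := by
    simpa only [Set.mem_union, Finset.filter_or] using Finset.card_union_le _ _
  convert (Nat.cast_le (α := ℝ)).2 hcard using 1
  · simp
  · push_cast; congr

theorem HasDensity.exists_notMem_of_zero {A B : Set ℕ} (hA : HasDensity A 0)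
    (hB : HasDensity B 0) : ∃ n, n ∉ A ∧ n ∉ B := by
  by_contra! h
  have hAB : A ∪ B = Set.univ := Set.eq_univ_of_forall fun n => by
    by_cases hn : n ∈ A
    exacts [Or.inl hn, Or.inr (h n hn)]
  have := (hA.union_of_zero hB).unique (hAB ▸ hasDensity_univ)
  norm_num at this

theorem exists_near_of_mem_stLIM {X : Type*} {S : X → X → X → ℝ} {r ε : ℝ} {x : ℕ → X}
    {ξ η : X} (hξ : ξ ∈ stLIM S r x) (hη : η ∈ stLIM S r x) (hε : 0 < ε) :
    ∃ n, S (x n) (x n) ξ < r + ε ∧ S (x n) (x n) η < r + ε := by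
  obtain ⟨n, hnξ, hnη⟩ := (hξ ε hε).exists_notMem_of_zero (hη ε hε)
  exact ⟨n, not_le.1 hnξ, not_le.1 hnη⟩

theorem stmt_11_general {X : Type*} (S : X → X → X → ℝ) (hS : IsSMetric S)
    (r : ℝ) (x : ℕ → X) :
    ∀ ξ ∈ stLIM S r x, ∀ η ∈ stLIM S r x, S ξ ξ η ≤ 3 * r := by
  intro ξ hξ η hη
  refine le_of_forall_pos_lt_add fun ε hε => ?_
  obtain ⟨n, hnξ, hnη⟩ := exists_near_of_mem_stLIM hξ hη (by positivity : 0 < ε / 3)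
  calc S ξ ξ η ≤ S ξ ξ (x n) + S ξ ξ (x n) + S η η (x n) := hS.triangle ξ ξ η (x n)
    _ = 2 * S (x n) (x n) ξ + S (x n) (x n) η := by rw [hS.symm ξ, hS.symm η]; ring
    _ < 3 * r + ε := by linarith

theorem stmt_11 {X : Type*} [Nonempty X] (S : X → X → X → ℝ) (hS : IsSMetric S)
    (r : ℝ) (hr : 0 ≤ r) (x : ℕ → X) :
    ∀ ξ ∈ stLIM S r x, ∀ η ∈ stLIM S r x, S ξ ξ η ≤ 3 * r :=
  stmt_11_general S hS r x
end
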